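/- For every labeled ALCI-KB (K,P,N) (so positive and negative examples are single constants), the following conditions are equivalent: (1) (K,P,N) is strongly ALCI-separable; (2) (K,P,N) is strongly FO-separable; (3) for all a ∈ P and b ∈ N there do not exist models A and B of K such that a^A and b^B realize the same K-type; (4) the ALCI-concept t₁ ⊔ ⋯ ⊔ t_n strongly separates (K,P,N), where t₁,…,t_n are the K-types realizable in K,a for some a ∈ P, each type identified with the conjunction of the concepts it contains. -/

import Mathlib

namespace Sep

/-! ## First-order syntax over relation symbols (arity, code) and variables ℕ.
Constants are natural numbers; formulas contain no constants. -/

inductive Fml : Type where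
  | eq : ℕ → ℕ → Fml
  | rel : (k : ℕ) → ℕ → (Fin k → ℕ) → Fml
  | neg : Fml → Fml
  | and : Fml → Fml → Fml
  | or : Fml → Fml → Fml
  | ex : ℕ → Fml → Fml
  | all : ℕ → Fml → Fml

namespace Fml

/-- Implication, as an abbreviation. -/
def imp (φ ψ : Fml) : Fml := .or (.neg φ) ψ

/-- Free variables of a formula. -/
def free : Fml → Set ℕ
  | eq x y => {x, y}
  | rel _ _ v => Set.range v
  | neg φ => φ.free
  | and φ ψ => φ.free ∪ ψ.free
  | or φ ψ => φ.free ∪ ψ.free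
  | ex y φ => φ.free \ {y}
  | all y φ => φ.free \ {y}

/-- All variables (free or bound) occurring in a formula. -/
def vars : Fml → Set ℕ
  | eq x y => {x, y}
  | rel _ _ v => Set.range v
  | neg φ => φ.vars
  | and φ ψ => φ.vars ∪ ψ.vars
  | or φ ψ => φ.vars ∪ ψ.vars
  | ex y φ => insert y φ.vars
  | all y φ => insert y φ.vars

/-- Variables occurring in equality atoms of a formula. -/
def eqVars : Fml → Set ℕ
  | eq x y => {x, y}
  | rel _ _ _ => ∅
  | neg φ => φ.eqVars
  | and φ ψ => φ.eqVars ∪ ψ.eqVars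
  | or φ ψ => φ.eqVars ∪ ψ.eqVars
  | ex _ φ => φ.eqVars
  | all _ φ => φ.eqVars

/-- The signature (set of relation symbols, as pairs (arity, code)) of a formula. -/
def sig : Fml → Set (ℕ × ℕ)
  | eq _ _ => ∅
  | rel k R _ => {(k, R)}
  | neg φ => φ.sig
  | and φ ψ => φ.sig ∪ ψ.sig
  | or φ ψ => φ.sig ∪ ψ.sig
  | ex _ φ => φ.sig
  | all _ φ => φ.sig

/-- Size of a formula (number of symbols, names counting as one symbol). -/
def size : Fml → ℕ
  | eq _ _ => 3
  | rel k _ _ => 1 + k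
  | neg φ => 1 + φ.size
  | and φ ψ => 1 + φ.size + ψ.size
  | or φ ψ => 1 + φ.size + ψ.size
  | ex _ φ => 2 + φ.size
  | all _ φ => 2 + φ.size

/-- Subformulas of a formula. -/
def subfmls : Fml → Set Fml
  | eq x y => {.eq x y}
  | rel k R v => {.rel k R v}
  | neg φ => insert (.neg φ) φ.subfmls
  | and φ ψ => insert (.and φ ψ) (φ.subfmls ∪ ψ.subfmls)
  | or φ ψ => insert (.or φ ψ) (φ.subfmls ∪ ψ.subfmls)
  | ex y φ => insert (.ex y φ) φ.subfmls
  | all y φ => insert (.all y φ) φ.subfmls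

end Fml

/-- Conjunction of a list of formulas (`x₀ = x₀` as the empty conjunction). -/
def bigAnd : List Fml → Fml
  | [] => .eq 0 0
  | [φ] => φ
  | φ :: ψ :: rest => .and φ (bigAnd (ψ :: rest))

/-- Disjunction of a list of formulas. -/
def bigOr : List Fml → Fml
  | [] => .neg (.eq 0 0)
  | [φ] => φ
  | φ :: ψ :: rest => .or φ (bigOr (ψ :: rest))

/-- Existential quantification over a list of variables. -/
def exList (ys : List ℕ) (φ : Fml) : Fml := ys.foldr Fml.ex φ

/-- Universal quantification over a list of variables. -/
def allList (ys : List ℕ) (φ : Fml) : Fml := ys.foldr Fml.all φ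

/-- The atom `R(x₀,…,x_{k-1})` over the fixed tuple of distinct variables `0,…,k-1`. -/
def baseAtom (k R : ℕ) : Fml := .rel k R fun i => (i : ℕ)

/-- The formula `∃ y⃗₁ (R(x⃗_k) ∧ ¬ x_u = x_w)` where `y⃗₁` is `x⃗_k` without `x_u`. -/
def connFml (k R u w : ℕ) : Fml :=
  exList ((List.range k).filter fun y => y != u) (.and (baseAtom k R) (.neg (.eq u w)))

/-! ## Structures and satisfaction -/

/-- A relational structure: a nonempty domain, interpretations of all relation
symbols, and interpretations of all constants (no unique name assumption). -/
structure Str : Type 1 where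
  Dom : Type
  dom_nonempty : Nonempty Dom
  rel : (k : ℕ) → ℕ → (Fin k → Dom) → Prop
  const : ℕ → Dom

namespace Fml

/-- Satisfaction of a formula in a structure under a variable assignment. -/
def Sat (A : Str) : Fml → (ℕ → A.Dom) → Prop
  | eq x y, v => v x = v y
  | rel k R args, v => A.rel k R fun i => v (args i)
  | neg φ, v => ¬ φ.Sat A v
  | and φ ψ, v => φ.Sat A v ∧ ψ.Sat A v
  | or φ ψ, v => φ.Sat A v ∨ ψ.Sat A v
  | ex y φ, v => ∃ d : A.Dom, φ.Sat A (Function.update v y d)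
  | all y φ, v => ∀ d : A.Dom, φ.Sat A (Function.update v y d)

/-- Satisfaction relativized to a subset of the domain (quantifiers range over the subset). -/
def SatIn (A : Str) (Dsub : Set A.Dom) : Fml → (ℕ → A.Dom) → Prop
  | eq x y, v => v x = v y
  | rel k R args, v => A.rel k R fun i => v (args i)
  | neg φ, v => ¬ φ.SatIn A Dsub v
  | and φ ψ, v => φ.SatIn A Dsub v ∧ ψ.SatIn A Dsub v
  | or φ ψ, v => φ.SatIn A Dsub v ∨ ψ.SatIn A Dsub v
  | ex y φ, v => ∃ d ∈ Dsub, φ.SatIn A Dsub (Function.update v y d)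
  | all y φ, v => ∀ d ∈ Dsub, φ.SatIn A Dsub (Function.update v y d)

end Fml


/-! ## Databases and knowledge bases -/

/-- A ground atom `R(a⃗)` over constants (natural numbers). -/
structure Atom : Type where
  arity : ℕ
  rel : ℕ
  args : Fin arity → ℕ

/-- Rename the constants of an atom. -/
def Atom.mapC (f : ℕ → ℕ) (a : Atom) : Atom := ⟨a.arity, a.rel, f ∘ a.args⟩

/-- An atom holds in a structure under an interpretation of the constants. -/
def Atom.Holds (a : Atom) (A : Str) (h : ℕ → A.Dom) : Prop :=
  A.rel a.arity a.rel fun i => h (a.args i)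

/-- A database: a finite set of ground atoms. -/
structure Database : Type where
  atoms : Set Atom
  finite : atoms.Finite

/-- The constants occurring in a database. -/
def Database.consts (D : Database) : Set ℕ := ⋃ a ∈ D.atoms, Set.range a.args

lemma Database.consts_finite (D : Database) : D.consts.Finite :=
  D.finite.biUnion fun _ _ => Set.finite_range _

/-- Number of constants of a database (used as its size `|D|`). -/
noncomputable def Database.csize (D : Database) : ℕ := D.consts.ncard

/-- The signature of a database. -/
def Database.sig (D : Database) : Set (ℕ × ℕ) := (fun a => (a.arity, a.rel)) '' D.atoms

/-- Two constants are adjacent in the Gaifman graph of a database. -/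
def Database.adj (D : Database) (c d : ℕ) : Prop :=
  ∃ a ∈ D.atoms, c ∈ Set.range a.args ∧ d ∈ Set.range a.args

/-- Restriction of a database to the atoms containing a constant reachable
from the set `S` in the Gaifman graph. -/
def Database.conRestrictSet (D : Database) (S : Set ℕ) : Database where
  atoms := {a | a ∈ D.atoms ∧ ∃ c ∈ S, ∃ d ∈ Set.range a.args, Relation.ReflTransGen D.adj c d}
  finite := D.finite.subset fun _ ha => ha.1

/-- `D_{con(a⃗)}`: restriction of `D` to the constants reachable from `[a⃗]`. -/
def Database.conRestrict (D : Database) {n : ℕ} (t : Fin n → ℕ) : Database :=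
  D.conRestrictSet (Set.range t)

/-- A knowledge base: a finite ontology (set of formulas) and a database. -/
structure KB : Type where
  onto : Set Fml
  onto_finite : onto.Finite
  db : Database

/-- The signature of a KB. -/
def KB.sig (K : KB) : Set (ℕ × ℕ) := (⋃ φ ∈ K.onto, φ.sig) ∪ K.db.sig

/-- Size of the ontology of a KB. -/
noncomputable def KB.ontoSize (K : KB) : ℕ := K.onto_finite.toFinset.sum Fml.size

/-- A structure is a model of a KB if it satisfies every sentence of the
ontology and every ground atom of the database. -/
def Str.IsModel (A : Str) (K : KB) : Prop :=
  (∀ φ ∈ K.onto, ∀ v : ℕ → A.Dom, φ.Sat A v) ∧ ∀ a ∈ K.db.atoms, a.Holds A A.const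

/-- Satisfiability of a KB. -/
def KB.Satisfiable (K : KB) : Prop := ∃ A : Str, A.IsModel K

/-- `K ⊨ φ(t⃗)`: every model of `K` satisfies `φ` at the tuple of constants `t⃗`. -/
def KB.entails (K : KB) {n : ℕ} (φ : Fml) (t : Fin n → ℕ) : Prop :=
  ∀ A : Str, A.IsModel K → ∀ v : ℕ → A.Dom, (∀ i : Fin n, v i.1 = A.const (t i)) → φ.Sat A v

/-! ## Separability -/

/-- `φ(x₀,…,x_{n-1})` (weakly) separates `(K, P, N)`. -/
def Separates {n : ℕ} (K : KB) (P N : Set (Fin n → ℕ)) (φ : Fml) : Prop :=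
  (∀ m ∈ φ.free, m < n) ∧ (∀ a ∈ P, K.entails φ a) ∧ ∀ b ∈ N, ¬ K.entails φ b

/-- `φ(x₀,…,x_{n-1})` strongly separates `(K, P, N)`. -/
def StronglySeparates {n : ℕ} (K : KB) (P N : Set (Fin n → ℕ)) (φ : Fml) : Prop :=
  (∀ m ∈ φ.free, m < n) ∧ (∀ a ∈ P, K.entails φ a) ∧ ∀ b ∈ N, K.entails (Fml.neg φ) b

/-- Projective separability in a language `L` (arbitrary helper symbols allowed). -/
def ProjSeparable (L : Set Fml) {n : ℕ} (K : KB) (P N : Set (Fin n → ℕ)) : Prop :=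
  ∃ φ ∈ L, Separates K P N φ

/-- Non-projective separability in a language `L` (only symbols of `sig(K)`). -/
def NonProjSeparable (L : Set Fml) {n : ℕ} (K : KB) (P N : Set (Fin n → ℕ)) : Prop :=
  ∃ φ ∈ L, φ.sig ⊆ K.sig ∧ Separates K P N φ

/-- Projective strong separability in a language `L`. -/
def ProjStronglySeparable (L : Set Fml) {n : ℕ} (K : KB) (P N : Set (Fin n → ℕ)) : Prop :=
  ∃ φ ∈ L, StronglySeparates K P N φ

/-- Non-projective strong separability in a language `L`. -/
def NonProjStronglySeparable (L : Set Fml) {n : ℕ} (K : KB) (P N : Set (Fin n → ℕ)) : Prop :=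
  ∃ φ ∈ L, φ.sig ⊆ K.sig ∧ StronglySeparates K P N φ

/-- A fragment of FO: a set of formulas closed under conjunction. -/
def IsFragment (L : Set Fml) : Prop := ∀ φ ∈ L, ∀ ψ ∈ L, Fml.and φ ψ ∈ L

/-! ## Homomorphisms from databases to structures -/

/-- `h` is a homomorphism from the database `D` into the structure `A`
(constants need not be preserved). -/
def DbHom (D : Database) (A : Str) (h : ℕ → A.Dom) : Prop :=
  ∀ a ∈ D.atoms, a.Holds A h

/-- `D,t⃗ → A,g⃗`: a homomorphism of pointed structures. -/
def PointedHom (D : Database) {n : ℕ} (t : Fin n → ℕ) (A : Str) (g : Fin n → A.Dom) : Prop :=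
  ∃ h : ℕ → A.Dom, DbHom D A h ∧ ∀ i : Fin n, h (t i) = g i

/-! ## The canonical CQ of a pointed database -/

/-- The variable associated with a constant `c` by the canonical CQ of `(D, t⃗)`:
the least answer variable `i` with `t i = c` if it exists, otherwise `n + c`. -/
noncomputable def varOf {n : ℕ} (t : Fin n → ℕ) (c : ℕ) : ℕ :=
  if ∃ i : Fin n, t i = c then sInf {m : ℕ | ∃ h : m < n, t ⟨m, h⟩ = c} else n + c

lemma Database.qvars_finite (D : Database) {n : ℕ} (t : Fin n → ℕ) :
    (D.consts \ Set.range t).Finite :=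
  D.consts_finite.subset Set.diff_subset

/-- The canonical CQ `φ_{D,t⃗}(x₀,…,x_{n-1})` of a pointed database. -/
noncomputable def canonCQ (D : Database) {n : ℕ} (t : Fin n → ℕ) : Fml :=
  exList ((D.qvars_finite t).toFinset.toList.map fun c => n + c)
    (bigAnd
      ((D.finite.toFinset.toList.map fun a =>
          Fml.rel a.arity a.rel fun i => varOf t (a.args i))
        ++
       ((List.finRange n ×ˢ List.finRange n).filterMap fun p =>
          if t p.1 = t p.2 then some (Fml.eq p.1.1 p.2.1) else none)))

/-- The canonical UCQ `⋁_{a⃗ ∈ P} φ_{D_{con(a⃗)},a⃗}`. -/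
noncomputable def canonUCQ (K : KB) {n : ℕ} (P : Set (Fin n → ℕ)) (hP : P.Finite) : Fml :=
  bigOr (hP.toFinset.toList.map fun t => canonCQ (K.db.conRestrict t) t)

/-! ## The merged database `D_{a⃗ = b⃗}` -/

/-- Equivalence identifying (the code of) `a i` with (the code of) the copy of `b i`. -/
def mergeEquiv {n : ℕ} (a b : Fin n → ℕ) : ℕ → ℕ → Prop :=
  Relation.ReflTransGen fun x y =>
    (∃ i : Fin n, x = 2 * a i ∧ y = 2 * b i + 1) ∨ ∃ i : Fin n, y = 2 * a i ∧ x = 2 * b i + 1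

/-- Canonical representative of the equivalence class. -/
noncomputable def mergeRep {n : ℕ} (a b : Fin n → ℕ) (x : ℕ) : ℕ :=
  sInf {y | mergeEquiv a b x y}

/-- `D_{a⃗ = b⃗}`: the union of `D` with a disjoint copy of itself in which
`a i` is identified with the copy of `b i`, for every `i`. -/
noncomputable def Database.merge (D : Database) {n : ℕ} (a b : Fin n → ℕ) : Database where
  atoms := (Atom.mapC (fun c => mergeRep a b (2 * c)) '' D.atoms) ∪
           (Atom.mapC (fun c => mergeRep a b (2 * c + 1)) '' D.atoms)
  finite := (D.finite.image _).union (D.finite.image _)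


/-! ## Fragments of FO -/

/-- Atomic formulas: equalities and relational atoms. -/
inductive IsAtomic : Fml → Prop
  | eq (x y : ℕ) : IsAtomic (.eq x y)
  | rel (k R : ℕ) (v : Fin k → ℕ) : IsAtomic (.rel k R v)

/-- Relational atoms. -/
inductive IsRelAtom : Fml → Prop
  | rel (k R : ℕ) (v : Fin k → ℕ) : IsRelAtom (.rel k R v)

/-- Conjunctions of atomic formulas. -/
inductive IsQFConj : Fml → Prop
  | atom {φ : Fml} : IsAtomic φ → IsQFConj φ
  | and {φ ψ : Fml} : IsQFConj φ → IsQFConj ψ → IsQFConj (.and φ ψ)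

/-- Conjunctive queries: existentially quantified conjunctions of relational
atoms and equalities between free variables. -/
inductive IsCQ : Fml → Prop
  | base {φ : Fml} : IsQFConj φ → IsCQ φ
  | ex {φ : Fml} (y : ℕ) : IsCQ φ → y ∉ φ.eqVars → IsCQ (.ex y φ)

/-- Unions of conjunctive queries: disjunctions of CQs with the same free variables. -/
inductive IsUCQ : Fml → Prop
  | cq {φ : Fml} : IsCQ φ → IsUCQ φ
  | or {φ ψ : Fml} : IsUCQ φ → IsUCQ ψ → φ.free = ψ.free → IsUCQ (.or φ ψ)

def UCQs : Set Fml := {φ | IsUCQ φ}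

/-- The guarded fragment GF. -/
inductive IsGF : Fml → Prop
  | eq (x y : ℕ) : IsGF (.eq x y)
  | rel (k R : ℕ) (v : Fin k → ℕ) : IsGF (.rel k R v)
  | neg {φ : Fml} : IsGF φ → IsGF (.neg φ)
  | and {φ ψ : Fml} : IsGF φ → IsGF ψ → IsGF (.and φ ψ)
  | or {φ ψ : Fml} : IsGF φ → IsGF ψ → IsGF (.or φ ψ)
  | exg (ys : List ℕ) {α φ : Fml} : IsAtomic α → IsGF φ → φ.free ⊆ α.free →
      (∀ y ∈ ys, y ∈ α.free) → IsGF (exList ys (.and α φ))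
  | allg (ys : List ℕ) {α φ : Fml} : IsAtomic α → IsGF φ → φ.free ⊆ α.free →
      (∀ y ∈ ys, y ∈ α.free) → IsGF (allList ys (α.imp φ))

def GFs : Set Fml := {φ | IsGF φ}

/-- The open guarded fragment openGF: all subformulas are open and equality is
never used as a guard. -/
inductive IsOpenGF : Fml → Prop
  | eq (x y : ℕ) : IsOpenGF (.eq x y)
  | rel (k R : ℕ) (v : Fin k → ℕ) : 0 < k → IsOpenGF (.rel k R v)
  | neg {φ : Fml} : IsOpenGF φ → IsOpenGF (.neg φ)
  | and {φ ψ : Fml} : IsOpenGF φ → IsOpenGF ψ → IsOpenGF (.and φ ψ)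
  | or {φ ψ : Fml} : IsOpenGF φ → IsOpenGF ψ → IsOpenGF (.or φ ψ)
  | exg (ys : List ℕ) {α φ : Fml} : IsRelAtom α → IsOpenGF φ → φ.free ⊆ α.free →
      (∀ y ∈ ys, y ∈ α.free) → ((Fml.and α φ).free \ {y | y ∈ ys}).Nonempty →
      IsOpenGF (exList ys (.and α φ))
  | allg (ys : List ℕ) {α φ : Fml} : IsRelAtom α → IsOpenGF φ → φ.free ⊆ α.free →
      (∀ y ∈ ys, y ∈ α.free) → ((α.imp φ).free \ {y | y ∈ ys}).Nonempty →
      IsOpenGF (allList ys (α.imp φ))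

def OpenGFs : Set Fml := {φ | IsOpenGF φ}

/-- The guarded negation fragment GNFO. -/
inductive IsGNFO : Fml → Prop
  | eq (x y : ℕ) : IsGNFO (.eq x y)
  | rel (k R : ℕ) (v : Fin k → ℕ) : IsGNFO (.rel k R v)
  | and {φ ψ : Fml} : IsGNFO φ → IsGNFO ψ → IsGNFO (.and φ ψ)
  | or {φ ψ : Fml} : IsGNFO φ → IsGNFO ψ → IsGNFO (.or φ ψ)
  | ex (y : ℕ) {φ : Fml} : IsGNFO φ → IsGNFO (.ex y φ)
  | gneg {α φ : Fml} : IsAtomic α → IsGNFO φ → φ.free ⊆ α.free → IsGNFO (.and α (.neg φ))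

def GNFOs : Set Fml := {φ | IsGNFO φ}

/-- The two-variable fragment FO²: only the two fixed variables `0` and `1` are used. -/
def FO2s : Set Fml := {φ : Fml | φ.vars ⊆ {0, 1}}

/-- Two variables are adjacent in the Gaifman graph of a formula (they co-occur
in an atom of the formula). -/
def Fml.varAdj (φ : Fml) (x y : ℕ) : Prop :=
  ∃ ψ ∈ φ.subfmls, IsAtomic ψ ∧ x ∈ ψ.free ∧ y ∈ ψ.free

/-- A rooted CQ: every variable is reachable from an answer (free) variable in
the Gaifman graph of the CQ. -/
def IsRootedCQ (φ : Fml) : Prop :=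
  IsCQ φ ∧ ∀ x ∈ φ.vars, ∃ u ∈ φ.free, Relation.ReflTransGen φ.varAdj u x

/-- Rooted UCQs. -/
inductive IsRootedUCQ : Fml → Prop
  | cq {φ : Fml} : IsRootedCQ φ → IsRootedUCQ φ
  | or {φ ψ : Fml} : IsRootedUCQ φ → IsRootedUCQ ψ → φ.free = ψ.free → IsRootedUCQ (.or φ ψ)

/-! ## ALCI concepts -/

/-- ALCI concepts: `⊤`, concept names, `¬`, `⊓`, and `∃R.C`/`∃R⁻.C`
(the Boolean indicates an inverse role). -/
inductive Concept : Type where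
  | top : Concept
  | atom : ℕ → Concept
  | neg : Concept → Concept
  | inter : Concept → Concept → Concept
  | exRole : Bool → ℕ → Concept → Concept

namespace Concept

/-- Extension of a concept in a structure. -/
def interp (A : Str) : Concept → Set A.Dom
  | top => Set.univ
  | atom c => {d | A.rel 1 c ![d]}
  | neg C => (C.interp A)ᶜ
  | inter C D => C.interp A ∩ D.interp A
  | exRole inv R C => {d | ∃ e ∈ C.interp A, if inv then A.rel 2 R ![e, d] else A.rel 2 R ![d, e]}

/-- Signature of a concept. -/
def csig : Concept → Set (ℕ × ℕ)
  | top => ∅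
  | atom c => {(1, c)}
  | neg C => C.csig
  | inter C D => C.csig ∪ D.csig
  | exRole _ R C => insert (2, R) C.csig

/-- Size of a concept. -/
def size : Concept → ℕ
  | top => 1
  | atom _ => 1
  | neg C => 1 + C.size
  | inter C D => 1 + C.size + D.size
  | exRole _ _ C => 2 + C.size

/-- Subconcepts of a concept. -/
def subconcepts : Concept → Set Concept
  | top => {top}
  | atom c => {atom c}
  | neg C => insert (neg C) C.subconcepts
  | inter C D => insert (inter C D) (C.subconcepts ∪ D.subconcepts)
  | exRole i R C => insert (exRole i R C) C.subconcepts

/-- The standard translation of a concept into an FO formula with free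
variable `x ∈ {0,1}` (the other of the two variables is `1 - x`). -/
def toFml : Concept → ℕ → Fml
  | top, x => .eq x x
  | atom c, x => .rel 1 c ![x]
  | neg C, x => .neg (C.toFml x)
  | inter C D, x => .and (C.toFml x) (D.toFml x)
  | exRole inv R C, x =>
      .ex (1 - x) (.and (if inv then Fml.rel 2 R ![1 - x, x] else Fml.rel 2 R ![x, 1 - x])
        (C.toFml (1 - x)))

end Concept

/-- ALCI concepts, viewed as FO formulas in the free variable `x₀`. -/
def ALCIs : Set Fml := {φ | ∃ C : Concept, φ = C.toFml 0}


/-! ## ALCI knowledge bases, types, bisimulations -/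

/-- The FO translation `∀x₀∀x₁ (C(x₀) → D(x₀))` of a concept inclusion. -/
def CIfml (p : Concept × Concept) : Fml :=
  .all 1 (.all 0 ((p.1.toFml 0).imp (p.2.toFml 0)))

/-- An ALCI knowledge base: a finite set of concept inclusions together with a
database containing only unary and binary atoms. -/
structure ALCIKB : Type where
  onto : Set (Concept × Concept)
  onto_finite : onto.Finite
  db : Database
  db_arity : ∀ a ∈ db.atoms, a.arity = 1 ∨ a.arity = 2

/-- The underlying FO knowledge base of an ALCI KB. -/
def ALCIKB.toKB (K : ALCIKB) : KB where
  onto := CIfml '' K.onto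
  onto_finite := K.onto_finite.image _
  db := K.db

/-- Signature of an ALCI KB. -/
def ALCIKB.sigK (K : ALCIKB) : Set (ℕ × ℕ) := K.toKB.sig

/-- Size of the ontology of an ALCI KB. -/
noncomputable def ALCIKB.ontoSize (K : ALCIKB) : ℕ :=
  K.onto_finite.toFinset.sum fun p => p.1.size + p.2.size + 1

/-- `cl(K)`: the concepts occurring in `K` together with `∃R.⊤`, `∃R⁻.⊤` for all
role names of `sig(K)`, closed under subconcepts and single negation. -/
def ALCIKB.cl (K : ALCIKB) : Set Concept :=
  ((⋃ p ∈ K.onto, p.1.subconcepts ∪ p.2.subconcepts) ∪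
     (⋃ C ∈ {C : Concept | ∃ a ∈ K.db.atoms, a.arity = 1 ∧ C = Concept.atom a.rel}, C.subconcepts) ∪
     (⋃ C ∈ {C : Concept | ∃ R i, ((2 : ℕ), R) ∈ K.sigK ∧ C = Concept.exRole i R Concept.top},
        C.subconcepts)) ∪
  Concept.neg ''
    ((⋃ p ∈ K.onto, p.1.subconcepts ∪ p.2.subconcepts) ∪
     (⋃ C ∈ {C : Concept | ∃ a ∈ K.db.atoms, a.arity = 1 ∧ C = Concept.atom a.rel}, C.subconcepts) ∪
     (⋃ C ∈ {C : Concept | ∃ R i, ((2 : ℕ), R) ∈ K.sigK ∧ C = Concept.exRole i R Concept.top},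
        C.subconcepts))

/-- `tp_K(A, d)`: the `K`-type of `d` in `A`. -/
def ALCIKB.tp (K : ALCIKB) (A : Str) (d : A.Dom) : Set Concept :=
  {C | C ∈ K.cl ∧ d ∈ C.interp A}

/-- `t` is a `K`-type: it is realized in some model of `K`. -/
def ALCIKB.IsType (K : ALCIKB) (t : Set Concept) : Prop :=
  ∃ A : Str, A.IsModel K.toKB ∧ ∃ d : A.Dom, K.tp A d = t

/-- `t` is realizable in `K, b`. -/
def ALCIKB.RealizableAt (K : ALCIKB) (b : ℕ) (t : Set Concept) : Prop :=
  ∃ A : Str, A.IsModel K.toKB ∧ K.tp A (A.const b) = t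

/-- A type is connected if it contains `∃R.⊤` for some role `R`. -/
def TypeConnected (t : Set Concept) : Prop :=
  ∃ i R, Concept.exRole i R Concept.top ∈ t

/-- `ρ = (inv, R)` is a role (a role name or its inverse); `roleHolds A ρ d e`
says that `(d, e)` is in the extension of the role. -/
def roleHolds (A : Str) (ρ : Bool × ℕ) (d e : A.Dom) : Prop :=
  if ρ.1 then A.rel 2 ρ.2 ![e, d] else A.rel 2 ρ.2 ![d, e]

/-- `S` is a Σ-bisimulation (for ALCI) between `A` and `B`. -/
structure IsALCIBisim (sg : Set (ℕ × ℕ)) (A B : Str) (S : Set (A.Dom × B.Dom)) : Prop where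
  atom : ∀ p ∈ S, ∀ c : ℕ, (1, c) ∈ sg → (A.rel 1 c ![p.1] ↔ B.rel 1 c ![p.2])
  forth : ∀ p ∈ S, ∀ ρ : Bool × ℕ, (2, ρ.2) ∈ sg →
    ∀ d' : A.Dom, roleHolds A ρ p.1 d' → ∃ e' : B.Dom, roleHolds B ρ p.2 e' ∧ (d', e') ∈ S
  back : ∀ p ∈ S, ∀ ρ : Bool × ℕ, (2, ρ.2) ∈ sg →
    ∀ e' : B.Dom, roleHolds B ρ p.2 e' → ∃ d' : A.Dom, roleHolds A ρ p.1 d' ∧ (d', e') ∈ S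

/-- `A,d ∼_{ALCI,Σ} B,e`. -/
def ALCIBisimilar (sg : Set (ℕ × ℕ)) (A : Str) (d : A.Dom) (B : Str) (e : B.Dom) : Prop :=
  ∃ S : Set (A.Dom × B.Dom), IsALCIBisim sg A B S ∧ (d, e) ∈ S

/-- A `K`-type `t` is ALCI-complete. -/
def ALCIKB.TypeComplete (K : ALCIKB) (t : Set Concept) : Prop :=
  ∀ A B : Str, A.IsModel K.toKB → B.IsModel K.toKB → ∀ (d : A.Dom) (e : B.Dom),
    K.tp A d = t → K.tp B e = t → ALCIBisimilar K.sigK A d B e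

/-- `(K,P,N)` is strongly incomplete: no connected `K`-type realizable at some
negative example is ALCI-complete. -/
def ALCIKB.StronglyIncomplete (K : ALCIKB) (N : Set ℕ) : Prop :=
  ∀ t : Set Concept, TypeConnected t → (∃ b ∈ N, K.RealizableAt b t) → ¬ K.TypeComplete t

/-- `t₁ ⇝_ρ t₂`: the types are `ρ`-coherent. -/
def ALCIKB.Coherent (K : ALCIKB) (t₁ t₂ : Set Concept) (ρ : Bool × ℕ) : Prop :=
  ∃ A : Str, A.IsModel K.toKB ∧ ∃ d e : A.Dom, K.tp A d = t₁ ∧ K.tp A e = t₂ ∧ roleHolds A ρ d e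

/-- The sequence `t₀ ρ₀ … ρ_n t_{n+1}` witnesses ALCI-incompleteness of the type `t`. -/
def ALCIKB.WitSeq (K : ALCIKB) (t : Set Concept) (n : ℕ)
    (ts : Fin (n + 2) → Set Concept) (ρs : Fin (n + 1) → Bool × ℕ) : Prop :=
  1 ≤ n ∧
  ts 0 = t ∧
  (∀ i : Fin (n + 2), K.IsType (ts i)) ∧
  (∀ i : Fin (n + 1), ((2 : ℕ), (ρs i).2) ∈ K.sigK) ∧
  (∀ i : Fin (n + 1), K.Coherent (ts i.castSucc) (ts i.succ) (ρs i)) ∧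
  ∃ A : Str, A.IsModel K.toKB ∧ ∃ d e : A.Dom,
    roleHolds A (ρs ⟨n - 1, by omega⟩) d e ∧
    K.tp A d = ts ⟨n - 1, by omega⟩ ∧ K.tp A e = ts ⟨n, by omega⟩ ∧
    ¬ ∃ f : A.Dom, K.tp A f = ts ⟨n + 1, by omega⟩ ∧ roleHolds A (ρs ⟨n, by omega⟩) e f

/-! ### Weak and strong separability by ALCI concepts -/

/-- A concept `C` (weakly) separates `(K, P, N)`. -/
def ALCIKB.SeparatesC (K : ALCIKB) (P N : Set ℕ) (C : Concept) : Prop :=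
  (∀ a ∈ P, ∀ A : Str, A.IsModel K.toKB → A.const a ∈ C.interp A) ∧
  ∀ b ∈ N, ¬ ∀ A : Str, A.IsModel K.toKB → A.const b ∈ C.interp A

/-- A concept `C` strongly separates `(K, P, N)`. -/
def ALCIKB.StronglySeparatesC (K : ALCIKB) (P N : Set ℕ) (C : Concept) : Prop :=
  (∀ a ∈ P, ∀ A : Str, A.IsModel K.toKB → A.const a ∈ C.interp A) ∧
  ∀ b ∈ N, ∀ A : Str, A.IsModel K.toKB → A.const b ∉ C.interp A

/-- Non-projective ALCI-separability of a labeled ALCI KB. -/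
def ALCIKB.CSeparable (K : ALCIKB) (P N : Set ℕ) : Prop :=
  ∃ C : Concept, C.csig ⊆ K.sigK ∧ K.SeparatesC P N C

/-- Projective ALCI-separability of a labeled ALCI KB. -/
def ALCIKB.CProjSeparable (K : ALCIKB) (P N : Set ℕ) : Prop :=
  ∃ C : Concept, K.SeparatesC P N C

/-- Non-projective strong ALCI-separability of a labeled ALCI KB. -/
def ALCIKB.CStronglySeparable (K : ALCIKB) (P N : Set ℕ) : Prop :=
  ∃ C : Concept, C.csig ⊆ K.sigK ∧ K.StronglySeparatesC P N C

/-! ### ALCI(Σ)-embeddings -/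

/-- An ALCI(Σ)-embedding of a (unary/binary) database into a structure. -/
def ALCIEmbed (sg : Set (ℕ × ℕ)) (D : Database) (A : Str) (S : Set (ℕ × A.Dom)) : Prop :=
  (∀ p ∈ S, ∀ c : ℕ, (⟨1, c, ![p.1]⟩ : Atom) ∈ D.atoms → A.rel 1 c ![p.2]) ∧
  (∀ p ∈ S, ∀ q ∈ S, p.1 = q.1 → ALCIBisimilar sg A p.2 A q.2) ∧
  (∀ p ∈ S, ∀ R a', (⟨2, R, ![p.1, a']⟩ : Atom) ∈ D.atoms →
      ∃ b' : A.Dom, A.rel 2 R ![p.2, b'] ∧ (a', b') ∈ S) ∧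
  (∀ p ∈ S, ∀ R a', (⟨2, R, ![a', p.1]⟩ : Atom) ∈ D.atoms →
      ∃ b' : A.Dom, A.rel 2 R ![b', p.2] ∧ (a', b') ∈ S)

/-- `D,a ≼_Σ A,d`: some ALCI(Σ)-embedding contains `(a, d)`. -/
def ALCIEmbeddable (sg : Set (ℕ × ℕ)) (D : Database) (a : ℕ) (A : Str) (d : A.Dom) : Prop :=
  ∃ S : Set (ℕ × A.Dom), ALCIEmbed sg D A S ∧ (a, d) ∈ S

/-! ### Forest models -/

/-- There is a role edge from `d` to `e` (in either direction). -/
def Str.RoleEdge (A : Str) (d e : A.Dom) : Prop :=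
  ∃ R, A.rel 2 R ![d, e] ∨ A.rel 2 R ![e, d]

/-- `(d, e)` is an edge induced by a binary database atom. -/
def Str.DbEdge (A : Str) (K : ALCIKB) (d e : A.Dom) : Prop :=
  ∃ R x y, (⟨2, R, ![x, y]⟩ : Atom) ∈ K.db.atoms ∧ d = A.const x ∧ e = A.const y

/-- A role edge that is not induced by the database. -/
def Str.TreeEdge (A : Str) (K : ALCIKB) (d e : A.Dom) : Prop :=
  A.RoleEdge d e ∧ ¬ A.DbEdge K d e ∧ ¬ A.DbEdge K e d

/-- The graph of tree edges. -/
def Str.forestGraph (A : Str) (K : ALCIKB) : SimpleGraph A.Dom where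
  Adj d e := d ≠ e ∧ A.TreeEdge K d e
  symm := ⟨by
    rintro d e ⟨hne, ⟨R, hR⟩, h1, h2⟩
    exact ⟨hne.symm, ⟨R, hR.symm⟩, h2, h1⟩⟩
  loopless := ⟨fun d h => h.1 rfl⟩

/-- `A` is a forest model of the ALCI KB `K`: a model that is the disjoint union
of tree-shaped structures, one rooted at each `c^A` for `c ∈ cons(D)`, extended
with the edges induced by the binary database atoms. -/
def Str.IsForestModel (A : Str) (K : ALCIKB) : Prop :=
  A.IsModel K.toKB ∧
  (∀ k R t, A.rel k R t → k = 1 ∨ k = 2) ∧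
  (∀ d : A.Dom, A.RoleEdge d d → A.DbEdge K d d) ∧
  (A.forestGraph K).IsAcyclic ∧
  (∀ d : A.Dom, ∃ c ∈ K.db.consts, (A.forestGraph K).Reachable (A.const c) d) ∧
  (∀ c ∈ K.db.consts, ∀ c' ∈ K.db.consts, A.const c ≠ A.const c' →
      ¬ (A.forestGraph K).Reachable (A.const c) (A.const c'))

/-- `A` has finite outdegree. -/
def Str.FiniteOutdegree (A : Str) : Prop :=
  ∀ d : A.Dom, {e : A.Dom | A.RoleEdge d e}.Finite

/-! ## Guarded bisimulations -/

/-- A set of domain elements is guarded in a structure. -/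
def Str.GuardedSet (A : Str) (G : Set A.Dom) : Prop :=
  (∃ d, G = {d}) ∨ ∃ k R, ∃ t : Fin k → A.Dom, A.rel k R t ∧ G = Set.range t

/-- A tuple is guarded in a structure. -/
def Str.GuardedTuple (A : Str) {k : ℕ} (t : Fin k → A.Dom) : Prop :=
  ∃ G, A.GuardedSet G ∧ Set.range t ⊆ G

/-- `a⃗ ↦ b⃗` is a partial Σ-isomorphism. -/
def PartialIso (sg : Set (ℕ × ℕ)) (A B : Str) {k : ℕ}
    (a : Fin k → A.Dom) (b : Fin k → B.Dom) : Prop :=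
  (∀ i j, a i = a j ↔ b i = b j) ∧
  ∀ m R, (m, R) ∈ sg → ∀ f : Fin m → Fin k, (A.rel m R (a ∘ f) ↔ B.rel m R (b ∘ f))

/-- A pair of equally long tuples in two structures. -/
structure GPair (A B : Str) : Type where
  k : ℕ
  a : Fin k → A.Dom
  b : Fin k → B.Dom

/-- Forth condition; if `conn = true` it is only required for guarded tuples
overlapping the current one (connected guarded bisimulations). -/
def StepForth (conn : Bool) (A B : Str) (I : Set (GPair A B)) (p : GPair A B) : Prop :=
  ∀ (k' : ℕ) (a' : Fin k' → A.Dom), A.GuardedTuple a' →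
    (conn → (Set.range a' ∩ Set.range p.a).Nonempty) →
    ∃ b' : Fin k' → B.Dom, GPair.mk k' a' b' ∈ I ∧ ∀ i j, p.a i = a' j → p.b i = b' j

/-- Back condition. -/
def StepBack (conn : Bool) (A B : Str) (I : Set (GPair A B)) (p : GPair A B) : Prop :=
  ∀ (k' : ℕ) (b' : Fin k' → B.Dom), B.GuardedTuple b' →
    (conn → (Set.range b' ∩ Set.range p.b).Nonempty) →
    ∃ a' : Fin k' → A.Dom, GPair.mk k' a' b' ∈ I ∧ ∀ i j, p.b i = b' j → p.a i = a' j

/-- `I` is a (connected, if `conn`) guarded Σ-bisimulation between `A` and `B`. -/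
def IsGBisim (conn : Bool) (sg : Set (ℕ × ℕ)) (A B : Str) (I : Set (GPair A B)) : Prop :=
  ∀ p ∈ I, A.GuardedTuple p.a ∧ B.GuardedTuple p.b ∧ PartialIso sg A B p.a p.b ∧
    StepForth conn A B I p ∧ StepBack conn A B I p

/-- `A,a⃗ ∼_{GF,Σ} B,b⃗` (`conn = false`) resp. `A,a⃗ ∼_{openGF,Σ} B,b⃗` (`conn = true`). -/
def GBisimilar (conn : Bool) (sg : Set (ℕ × ℕ)) (A : Str) {n : ℕ} (a : Fin n → A.Dom)
    (B : Str) (b : Fin n → B.Dom) : Prop :=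
  ∃ I : Set (GPair A B), IsGBisim conn sg A B I ∧ PartialIso sg A B a b ∧
    StepForth conn A B I ⟨n, a, b⟩ ∧ StepBack conn A B I ⟨n, a, b⟩

/-- A sequence `I_ℓ, …, I₀` witnessing (connected) guarded Σ `ℓ`-bisimilarity. -/
def IsGBisimSeq (conn : Bool) (sg : Set (ℕ × ℕ)) (A B : Str)
    (Is : ℕ → Set (GPair A B)) (ℓ : ℕ) : Prop :=
  (∀ i, i < ℓ → ∀ p ∈ Is i, A.GuardedTuple p.a ∧ B.GuardedTuple p.b) ∧
  (∀ i, i ≤ ℓ → ∀ p ∈ Is i, PartialIso sg A B p.a p.b) ∧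
  ∀ i, i < ℓ → ∀ p ∈ Is (i + 1), StepForth conn A B (Is i) p ∧ StepBack conn A B (Is i) p

/-- `A,a⃗ ∼^ℓ_{GF,Σ} B,b⃗` (`conn = false`) resp. `A,a⃗ ∼^ℓ_{openGF,Σ} B,b⃗` (`conn = true`). -/
def GLBisimilar (conn : Bool) (sg : Set (ℕ × ℕ)) (A : Str) {n : ℕ} (a : Fin n → A.Dom)
    (B : Str) (b : Fin n → B.Dom) (ℓ : ℕ) : Prop :=
  ∃ Is : ℕ → Set (GPair A B), IsGBisimSeq conn sg A B Is ℓ ∧ GPair.mk n a b ∈ Is ℓ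

/-! ## Guarded Σ ℓ-embeddings -/

/-- A pair of tuples: constants of a database and elements of a structure. -/
structure EPair (A : Str) : Type where
  k : ℕ
  c : Fin k → ℕ
  f : Fin k → A.Dom

/-- `p` is a partial embedding (injective partial homomorphism) from `D` into `A`. -/
def IsPartialEmbed (D : Database) (A : Str) (p : EPair A) : Prop :=
  (∀ i j, p.c i = p.c j ↔ p.f i = p.f j) ∧
  (∀ i, p.c i ∈ D.consts) ∧
  ∀ a ∈ D.atoms, ∀ g : Fin a.arity → Fin p.k, a.args = p.c ∘ g →
    A.rel a.arity a.rel (p.f ∘ g)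

/-- Guarded sets of a database. -/
def Database.GuardedSet (D : Database) (G : Set ℕ) : Prop :=
  (∃ c ∈ D.consts, G = {c}) ∨ ∃ a ∈ D.atoms, G = Set.range a.args

/-- `e` is a homomorphism from `D` onto `D'`. -/
def DbHomOnto (e : ℕ → ℕ) (D D' : Database) : Prop :=
  (∀ a ∈ D.atoms, a.mapC e ∈ D'.atoms) ∧ ∀ a' ∈ D'.atoms, ∃ a ∈ D.atoms, a.mapC e = a'

/-- `D,t⃗ ≼^ℓ_{openGF,Σ} A,b⃗`: there is a guarded Σ `ℓ`-embedding `(e, H)`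
between the pointed database `(D, t⃗)` and the pointed structure `(A, b⃗)`. -/
def GLEmbed (sg : Set (ℕ × ℕ)) (D : Database) {n : ℕ} (t : Fin n → ℕ)
    (A : Str) (b : Fin n → A.Dom) (ℓ : ℕ) : Prop :=
  ∃ (D' : Database) (e : ℕ → ℕ) (H : Set (EPair A)),
    DbHomOnto e D D' ∧
    (∀ p ∈ H, IsPartialEmbed D' A p) ∧
    EPair.mk n (e ∘ t) b ∈ H ∧
    (∀ G : Set ℕ, D'.GuardedSet G → ∃ p ∈ H, Set.range p.c = G) ∧
    ∀ p₁ ∈ H, ∀ p₂ ∈ H,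
      ∃ (m : ℕ) (j₁ : Fin m → Fin p₁.k) (j₂ : Fin m → Fin p₂.k),
        p₁.c ∘ j₁ = p₂.c ∘ j₂ ∧
        Set.range (p₁.c ∘ j₁) = Set.range p₁.c ∩ Set.range p₂.c ∧
        PartialIso sg A A (p₁.f ∘ j₁) (p₂.f ∘ j₂) ∧
        ∀ (k' : ℕ) (g : Fin k' → Fin m),
          Set.range (p₁.f ∘ j₁ ∘ g) = Set.range (p₁.f ∘ j₁) →
          GLBisimilar true sg A (p₁.f ∘ j₁ ∘ g) A (p₂.f ∘ j₂ ∘ g) ℓ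

/-! ## Gaifman graph of a structure -/

/-- Adjacency in the Gaifman graph of a structure. -/
def Str.Adj (A : Str) (d e : A.Dom) : Prop :=
  ∃ k R, ∃ t : Fin k → A.Dom, A.rel k R t ∧ d ∈ Set.range t ∧ e ∈ Set.range t

/-- `WithinDist A m d e`: `e` is at distance at most `m` from `d` in the
Gaifman graph of `A`. -/
def WithinDist (A : Str) : ℕ → A.Dom → A.Dom → Prop
  | 0, d, e => d = e
  | m + 1, d, e => d = e ∨ ∃ c, A.Adj d c ∧ WithinDist A m c e

/-! ## K-types for GF-KBs -/

/-- `cl(K)` for a GF-KB: the formulas of the ontology, equalities between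
distinct variables, and for every `R ∈ sig(K)` of arity `k` the formulas
`R(x⃗_k)`, `∃y⃗₁(R(x⃗_k) ∧ ¬ x_u = x_w)` and `∃y⃗₂ R(x⃗_k)` (`[y⃗₂] ⊆ [x⃗_k]∖{x_u,x_w}`),
closed under subformulas and single negation. -/
def KB.clGFbase (K : KB) : Set Fml :=
  K.onto ∪
  {φ | ∃ x y : ℕ, x ≠ y ∧ φ = Fml.eq x y} ∪
  {φ | ∃ k R, (k, R) ∈ K.sig ∧
    (φ = baseAtom k R ∨
     (∃ u w : ℕ, u < k ∧ w < k ∧ u ≠ w ∧ φ = connFml k R u w) ∨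
     ∃ u w : ℕ, u < k ∧ w < k ∧ u ≠ w ∧
       ∃ ys : List ℕ, (∀ z ∈ ys, z < k ∧ z ≠ u ∧ z ≠ w) ∧ φ = exList ys (baseAtom k R))}

def KB.clGF (K : KB) : Set Fml :=
  (⋃ φ ∈ K.clGFbase, φ.subfmls) ∪ Fml.neg '' (⋃ φ ∈ K.clGFbase, φ.subfmls)

/-- `tp_K(A, b⃗)`: the `K`-type of the tuple `b⃗` in `A`, represented as the set
of pairs `(φ, σ)` with `φ ∈ cl(K)` and `σ` a substitution of the variables of
`φ` by positions of `b⃗` making `φ` true at `b⃗`. -/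
def KB.tpGF (K : KB) (A : Str) {m : ℕ} (b : Fin m → A.Dom) : Set (Fml × (ℕ → Fin m)) :=
  {p | p.1 ∈ K.clGF ∧ p.1.Sat A fun x => b (p.2 x)}

/-- `Φ` is a `K`-type (of tuples of length `m`). -/
def KB.IsGFTypeAt (K : KB) {m : ℕ} (Φ : Set (Fml × (ℕ → Fin m))) : Prop :=
  ∃ A : Str, A.IsModel K ∧ ∃ b : Fin m → A.Dom, K.tpGF A b = Φ

/-- `Φ` is realizable in `K, t⃗`. -/
def KB.GFRealizableAt (K : KB) {m : ℕ} (t : Fin m → ℕ) (Φ : Set (Fml × (ℕ → Fin m))) : Prop :=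
  ∃ A : Str, A.IsModel K ∧ K.tpGF A (fun i => A.const (t i)) = Φ

/-- The tuple `w⃗` satisfies all (substituted) formulas of `Φ` in `A`. -/
def TypeSat (A : Str) {m : ℕ} (w : Fin m → A.Dom) (Φ : Set (Fml × (ℕ → Fin m))) : Prop :=
  ∀ p ∈ Φ, p.1.Sat A fun x => w (p.2 x)

/-- A `K`-type `Φ(x⃗)` is connected: it contains a formula `∃y⃗₁(R(x⃗) ∧ x_u ≠ x_w)`. -/
def GFTypeConnected {m : ℕ} (Φ : Set (Fml × (ℕ → Fin m))) : Prop :=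
  ∃ k R u w, ∃ σ : ℕ → Fin m, u < k ∧ w < k ∧ u ≠ w ∧ (connFml k R u w, σ) ∈ Φ

/-- A `K`-type `Φ(x⃗)` is guarded: it contains the atom `R(x⃗)` (on the full tuple). -/
def GFTypeGuarded {m : ℕ} (Φ : Set (Fml × (ℕ → Fin m))) : Prop :=
  ∃ R, ∃ σ : ℕ → Fin m, (∀ i : Fin m, σ i.1 = i) ∧ (baseAtom m R, σ) ∈ Φ

/-- A `K`-type is non-unary: it contains `¬ (x = y)` for (substituted-)distinct variables. -/
def GFTypeNonUnary {m : ℕ} (Φ : Set (Fml × (ℕ → Fin m))) : Prop :=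
  ∃ x y, ∃ σ : ℕ → Fin m, σ x ≠ σ y ∧ (Fml.neg (.eq x y), σ) ∈ Φ

/-- The restriction of a type `Φ(x⃗)` to the single variable `x_j`. -/
def GFRestrict1 {m : ℕ} (Φ : Set (Fml × (ℕ → Fin m))) (j : Fin m) :
    Set (Fml × (ℕ → Fin 1)) :=
  {q | ∃ σ : ℕ → Fin m, (q.1, σ) ∈ Φ ∧ ∀ x ∈ q.1.free, σ x = j}

/-- A `K`-type is openGF-complete: any two pointed models of `K` realizing it
are connected guarded `sig(K)`-bisimilar. -/
def KB.OpenGFComplete (K : KB) {m : ℕ} (Φ : Set (Fml × (ℕ → Fin m))) : Prop :=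
  ∀ A B : Str, A.IsModel K → B.IsModel K → ∀ (a : Fin m → A.Dom) (b : Fin m → B.Dom),
    K.tpGF A a = Φ → K.tpGF B b = Φ → GBisimilar true K.sig A a B b

/-! ## K-types with explicit variable tuples, and witness sequences -/

/-- A `K`-type together with an explicit tuple of distinct variables. -/
structure GFTypeV : Type where
  m : ℕ
  xs : Fin m → ℕ
  xs_inj : Function.Injective xs
  Phi : Set (Fml × (ℕ → Fin m))

/-- The type `T` is satisfied under the assignment `μ` of its variables. -/
def GFTypeV.SatUnder (T : GFTypeV) (A : Str) (μ : ℕ → A.Dom) : Prop :=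
  ∀ p ∈ T.Phi, p.1.Sat A fun x => μ (T.xs (p.2 x))

/-- `T` is a `K`-type. -/
def GFTypeV.IsTypeOf (T : GFTypeV) (K : KB) : Prop := K.IsGFTypeAt T.Phi

/-- Two types (with explicit variables) are coherent: some model of `K`
satisfies their union under a common assignment. -/
def GFCoherent (K : KB) (T₁ T₂ : GFTypeV) : Prop :=
  ∃ A : Str, A.IsModel K ∧ ∃ μ : ℕ → A.Dom, T₁.SatUnder A μ ∧ T₂.SatUnder A μ

/-- The sequence `Φ₀(x⃗₀),…,Φ_{n+1}(x⃗_{n+1})` witnesses openGF-incompleteness of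
the `K`-type `Φ(x)` with one free variable. -/
def GFWitSeq (K : KB) (Φ : Set (Fml × (ℕ → Fin 1))) (n : ℕ)
    (Ts : Fin (n + 2) → GFTypeV) : Prop :=
  (∃ j : Fin (Ts 0).m, GFRestrict1 (Ts 0).Phi j = Φ) ∧
  (∀ i : Fin (n + 2), (Ts i).IsTypeOf K ∧ GFTypeGuarded (Ts i).Phi ∧ GFTypeNonUnary (Ts i).Phi) ∧
  (∀ i : Fin (n + 1),
    (Set.range (Ts i.castSucc).xs ∩ Set.range (Ts i.succ).xs).Nonempty) ∧
  (∀ i : Fin (n + 1), GFCoherent K (Ts i.castSucc) (Ts i.succ)) ∧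
  ∃ A : Str, A.IsModel K ∧ ∃ μ : ℕ → A.Dom,
    (Ts ⟨n, by omega⟩).SatUnder A μ ∧
    ¬ ∃ μ' : ℕ → A.Dom,
        (∀ x, x ∈ Set.range (Ts ⟨n, by omega⟩).xs → x ∈ Set.range (Ts ⟨n + 1, by omega⟩).xs →
          μ' x = μ x) ∧
        (Ts ⟨n + 1, by omega⟩).SatUnder A μ'

/-! ## Relativization and finite controllability -/

/-- `L` has the relativization property. -/
def RelativizationProperty (L : Set Fml) : Prop :=
  ∀ φ ∈ L, φ.free = ∅ → ∀ c : ℕ, ((1 : ℕ), c) ∉ φ.sig →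
    ∃ φ' ∈ L, φ'.free = ∅ ∧ ∀ (B : Str) (v : ℕ → B.Dom),
      (φ'.Sat B v ↔ φ.SatIn B {d | B.rel 1 c ![d]} v)

/-- Evaluating queries from `Q` is finitely controllable on `L`-KBs. -/
def FinitelyControllable (Q L : Set Fml) : Prop :=
  ∀ K : KB, (∀ φ ∈ K.onto, φ ∈ L) → (∀ φ ∈ K.onto, φ.free = ∅) →
  ∀ (n : ℕ) (q : Fml), q ∈ Q → (∀ m ∈ q.free, m < n) →
  ∀ c : Fin n → ℕ,
  (∃ A : Str, A.IsModel K ∧ ∃ v : ℕ → A.Dom,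
      (∀ i : Fin n, v i.1 = A.const (c i)) ∧ ¬ q.Sat A v) →
  ∃ A : Str, Finite A.Dom ∧ A.IsModel K ∧ ∃ v : ℕ → A.Dom,
      (∀ i : Fin n, v i.1 = A.const (c i)) ∧ ¬ q.Sat A v

/-!
(1 ⇒ 2) is the standard translation of concepts. For (2 ⇒ 3), suppose `a^A` and `b^B` realize
the same `K`-type. Glue `A` and `B` by identifying these two points; since `cl(K)` is closed
under subconcepts, every element of the glued structure keeps its concepts of `cl(K)`, so it is
a model of `K` both with the constants of `A` and with those of `B`. A formula without constants
cannot hold at `a` in the first and fail at `b` in the second, as these are the same point.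
For (3 ⇒ 4 ⇒ 1): `cl(K)` is finite, so there are finitely many `K`-types and their disjunction is
a concept; and since `cl(K)` is closed under single negation, an element satisfying all concepts
of a `K`-type has exactly that type.
-/

lemma comp_vec1 {α β : Type} (f : α → β) (a : α) : (fun i => f (![a] i)) = ![f a] :=
  (FinVec.map_eq f ![a]).symm

lemma comp_vec2 {α β : Type} (f : α → β) (a b : α) : (fun i => f (![a, b] i)) = ![f a, f b] :=
  (FinVec.map_eq f ![a, b]).symm

namespace Concept

lemma mem_subconcepts_self (C : Concept) : C ∈ C.subconcepts := by
  cases C <;> simp [subconcepts]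

lemma subconcepts_finite (C : Concept) : C.subconcepts.Finite := by
  induction C with
  | top | atom => exact Set.finite_singleton _
  | neg _ ih | exRole _ _ _ ih => exact ih.insert _
  | inter _ _ ih₁ ih₂ => exact (ih₁.union ih₂).insert _

lemma csig_subset_of_mem_subconcepts {C D : Concept} (h : D ∈ C.subconcepts) :
    D.csig ⊆ C.csig := by
  induction C with
  | top | atom => rw [Set.mem_singleton_iff.1 h]
  | neg C ih | exRole _ _ C ih =>
      rcases h with rfl | h
      · rfl
      · exact (ih h).trans (by simp [csig, Set.subset_insert])
  | inter C₁ C₂ ih₁ ih₂ =>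
      rcases h with rfl | h | h
      · rfl
      · exact (ih₁ h).trans Set.subset_union_left
      · exact (ih₂ h).trans Set.subset_union_right

lemma mem_interp_exRole {A : Str} {inv : Bool} {R : ℕ} {C : Concept} {d : A.Dom} :
    d ∈ (exRole inv R C).interp A ↔ ∃ e ∈ C.interp A, roleHolds A (inv, R) d e :=
  Iff.rfl

def conj : List Concept → Concept
  | [] => top
  | C :: l => inter C (conj l)

def disj (l : List Concept) : Concept := neg (conj (l.map neg))

lemma mem_interp_conj {A : Str} {d : A.Dom} (l : List Concept) :
    d ∈ (conj l).interp A ↔ ∀ C ∈ l, d ∈ C.interp A := by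
  induction l with
  | nil => simp [conj, interp]
  | cons C l ih => simp [conj, interp, ih]

lemma mem_interp_disj {A : Str} {d : A.Dom} (l : List Concept) :
    d ∈ (disj l).interp A ↔ ∃ C ∈ l, d ∈ C.interp A := by
  simp [disj, interp, mem_interp_conj]

lemma csig_conj_subset (l : List Concept) : (conj l).csig ⊆ ⋃ C ∈ l, C.csig := by
  induction l with
  | nil => simp [conj, csig]
  | cons C l ih =>
      simp only [conj, csig, List.mem_cons, Set.iUnion_iUnion_eq_or_left]
      exact Set.union_subset_union_right _ ih

lemma csig_disj_subset (l : List Concept) : (disj l).csig ⊆ ⋃ C ∈ l, C.csig := by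
  simpa [disj, csig] using csig_conj_subset (l.map neg)

lemma sat_toFml {A : Str} (C : Concept) {x : ℕ} (hx : x ≤ 1) (v : ℕ → A.Dom) :
    (C.toFml x).Sat A v ↔ v x ∈ C.interp A := by
  induction C generalizing x v with
  | top => simp [toFml, Fml.Sat, interp]
  | atom c =>
      simp only [toFml, Fml.Sat, interp, Set.mem_ofPred_eq, comp_vec1]
  | neg C ih => simp only [toFml, Fml.Sat, interp, Set.mem_compl_iff, ih hx]
  | inter C D ihC ihD => simp only [toFml, Fml.Sat, interp, Set.mem_inter_iff, ihC hx, ihD hx]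
  | exRole inv R C ih =>
      have hne : x ≠ 1 - x := by omega
      simp only [toFml, Fml.Sat, mem_interp_exRole, ih (by omega : 1 - x ≤ 1), roleHolds]
      cases inv <;> simp [Fml.Sat, comp_vec2, Function.update_of_ne hne, and_comm]

lemma free_toFml (C : Concept) {x : ℕ} (hx : x ≤ 1) : (C.toFml x).free ⊆ {x} := by
  induction C generalizing x with
  | top => simp [toFml, Fml.free]
  | atom c => simp [toFml, Fml.free]
  | neg C ih => exact ih hx
  | inter C D ihC ihD => exact Set.union_subset (ihC hx) (ihD hx)
  | exRole inv R C ih =>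
      have hC := ih (x := 1 - x) (by omega)
      intro y hy
      cases inv <;> simp [toFml, Fml.free] at hy <;> grind

lemma sig_toFml (C : Concept) (x : ℕ) : (C.toFml x).sig = C.csig := by
  induction C generalizing x with
  | exRole inv R C ih => cases inv <;> simp [toFml, Fml.sig, csig, ih, Set.singleton_union]
  | _ => simp_all [toFml, Fml.sig, csig]

end Concept

lemma Fml.sig_finite (φ : Fml) : φ.sig.Finite := by
  induction φ with
  | eq => exact Set.finite_empty
  | rel => exact Set.finite_singleton _
  | neg _ ih | ex _ _ ih | all _ _ ih => exact ih
  | and _ _ ih₁ ih₂ | or _ _ ih₁ ih₂ => exact ih₁.union ih₂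

lemma sig_CIfml (p : Concept × Concept) : (CIfml p).sig = p.1.csig ∪ p.2.csig := by
  simp [CIfml, Fml.imp, Fml.sig, Concept.sig_toFml]

lemma forall_sat_CIfml_iff (A : Str) (p : Concept × Concept) :
    (∀ v : ℕ → A.Dom, (CIfml p).Sat A v) ↔ p.1.interp A ⊆ p.2.interp A := by
  simp only [CIfml, Fml.imp, Fml.Sat, Concept.sat_toFml _ zero_le_one, Function.update_self]
  obtain ⟨d⟩ := A.dom_nonempty
  exact ⟨fun h z hz => (h (fun _ => d) d z).resolve_left (not_not_intro hz),
    fun h _ _ z => not_or_of_imp (@h z)⟩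

lemma Str.isModel_toKB_iff (A : Str) (K : ALCIKB) :
    A.IsModel K.toKB ↔
      (∀ p ∈ K.onto, p.1.interp A ⊆ p.2.interp A) ∧ ∀ a ∈ K.db.atoms, a.Holds A A.const := by
  simp only [Str.IsModel, ALCIKB.toKB, Set.forall_mem_image, forall_sat_CIfml_iff]

namespace ALCIKB

variable (K : ALCIKB)

def clBase : Set Concept :=
  (⋃ p ∈ K.onto, p.1.subconcepts ∪ p.2.subconcepts) ∪
    (⋃ C ∈ {C : Concept | ∃ a ∈ K.db.atoms, a.arity = 1 ∧ C = Concept.atom a.rel},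
      C.subconcepts) ∪
    (⋃ C ∈ {C : Concept | ∃ R i, ((2 : ℕ), R) ∈ K.sigK ∧ C = Concept.exRole i R Concept.top},
      C.subconcepts)

lemma cl_eq : K.cl = K.clBase ∪ Concept.neg '' K.clBase := rfl

lemma subconcepts_subset_cl {p : Concept × Concept} (hp : p ∈ K.onto) :
    p.1.subconcepts ⊆ K.cl ∧ p.2.subconcepts ⊆ K.cl := by
  constructor <;> intro C hC
  · exact Or.inl (Or.inl (Or.inl (Set.mem_iUnion₂.2 ⟨p, hp, Or.inl hC⟩)))
  · exact Or.inl (Or.inl (Or.inl (Set.mem_iUnion₂.2 ⟨p, hp, Or.inr hC⟩)))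

lemma neg_mem_cl_or {C : Concept} (hC : C ∈ K.cl) :
    Concept.neg C ∈ K.cl ∨ ∃ C', C = Concept.neg C' ∧ C' ∈ K.cl := by
  rw [cl_eq] at hC
  rcases hC with hC | ⟨C', hC', rfl⟩
  · exact Or.inl (Or.inr ⟨C, hC, rfl⟩)
  · exact Or.inr ⟨C', rfl, Or.inl hC'⟩

lemma sigK_finite : K.sigK.Finite :=
  (K.toKB.onto_finite.biUnion fun φ _ => φ.sig_finite).union (K.db.finite.image _)

lemma cl_finite : K.cl.Finite := by
  have hBase : K.clBase.Finite := by
    refine ((K.onto_finite.biUnion fun p _ =>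
      p.1.subconcepts_finite.union p.2.subconcepts_finite).union ?_).union ?_
    · refine Set.Finite.biUnion ?_ fun C _ => C.subconcepts_finite
      refine (K.db.finite.image fun a => Concept.atom a.rel).subset ?_
      rintro C ⟨a, ha, -, rfl⟩
      exact ⟨a, ha, rfl⟩
    · refine Set.Finite.biUnion ?_ fun C _ => C.subconcepts_finite
      refine ((K.sigK_finite.prod (Set.finite_univ (α := Bool))).image
        fun q => Concept.exRole q.2 q.1.2 Concept.top).subset ?_
      rintro C ⟨R, i, hR, rfl⟩
      exact ⟨((2, R), i), ⟨hR, trivial⟩, rfl⟩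
  rw [cl_eq]
  exact hBase.union (hBase.image _)

lemma csig_subset_sigK {C : Concept} (hC : C ∈ K.cl) : C.csig ⊆ K.sigK := by
  have hBase : ∀ C ∈ K.clBase, C.csig ⊆ K.sigK := by
    rintro C ((h | h) | h) <;> obtain ⟨C₀, hC₀, hC⟩ := Set.mem_iUnion₂.1 h
    · have hsig : (CIfml C₀).sig ⊆ K.sigK :=
        (Set.subset_biUnion_of_mem (Set.mem_image_of_mem _ hC₀)).trans Set.subset_union_left
      rw [sig_CIfml] at hsig
      rcases hC with hC | hC
      · exact (Concept.csig_subset_of_mem_subconcepts hC).trans (Set.union_subset_iff.1 hsig).1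
      · exact (Concept.csig_subset_of_mem_subconcepts hC).trans (Set.union_subset_iff.1 hsig).2
    · obtain ⟨a, ha, h1, rfl⟩ := hC₀
      refine (Concept.csig_subset_of_mem_subconcepts hC).trans ?_
      simp only [Concept.csig, Set.singleton_subset_iff, ← h1]
      exact Or.inr ⟨a, ha, rfl⟩
    · obtain ⟨R, i, hR, rfl⟩ := hC₀
      refine (Concept.csig_subset_of_mem_subconcepts hC).trans ?_
      simpa [Concept.csig] using hR
  rw [cl_eq] at hC
  rcases hC with hC | ⟨C', hC', rfl⟩
  · exact hBase C hC
  · exact hBase C' hC'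

lemma tp_eq_tp_iff {A B : Str} {d : A.Dom} {e : B.Dom} :
    K.tp A d = K.tp B e ↔ ∀ C ∈ K.cl, (d ∈ C.interp A ↔ e ∈ C.interp B) := by
  simp only [Set.ext_iff, tp, Set.mem_ofPred_eq, and_congr_right_iff]

lemma tp_eq_of_forall_mem_interp {A B : Str} {d : A.Dom} {e : B.Dom}
    (h : ∀ C ∈ K.tp B e, d ∈ C.interp A) : K.tp A d = K.tp B e := by
  refine K.tp_eq_tp_iff.2 fun C hC => ⟨fun hd => ?_, fun he => h C ⟨hC, he⟩⟩
  by_contra he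
  rcases K.neg_mem_cl_or hC with hneg | ⟨C', rfl, hC'⟩
  · exact h _ ⟨hneg, he⟩ hd
  · exact he fun he' => hd (h C' ⟨hC', he'⟩)

end ALCIKB

def Str.withConst (A : Str) (c : ℕ → A.Dom) : Str := { A with const := c }

lemma Fml.sat_withConst {A : Str} (c : ℕ → A.Dom) (φ : Fml) (v : ℕ → A.Dom) :
    φ.Sat (A.withConst c) v ↔ φ.Sat A v := by
  induction φ generalizing v with
  | ex _ _ ih => exact exists_congr fun _ => ih _
  | all _ _ ih => exact forall_congr' fun _ => ih _
  | eq | rel => exact Iff.rfl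
  | neg _ ih => exact not_congr (ih v)
  | and _ _ ih₁ ih₂ => exact and_congr (ih₁ v) (ih₂ v)
  | or _ _ ih₁ ih₂ => exact or_congr (ih₁ v) (ih₂ v)

lemma exists_vec1_eq_comp {α β : Type} (j : α → β) (z : β) (p : (Fin 1 → α) → Prop) :
    (∃ s, ![z] = j ∘ s ∧ p s) ↔ ∃ x, z = j x ∧ p ![x] := by
  constructor
  · rintro ⟨s, hs, hp⟩
    refine ⟨s 0, congrFun hs 0, ?_⟩
    exact (FinVec.etaExpand_eq s).symm ▸ hp
  · rintro ⟨x, rfl, hp⟩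
    exact ⟨![x], (comp_vec1 j x).symm, hp⟩

lemma exists_vec2_eq_comp {α β : Type} (j : α → β) (z w : β) (p : (Fin 2 → α) → Prop) :
    (∃ s, ![z, w] = j ∘ s ∧ p s) ↔ ∃ x x', z = j x ∧ w = j x' ∧ p ![x, x'] := by
  constructor
  · rintro ⟨s, hs, hp⟩
    refine ⟨s 0, s 1, congrFun hs 0, congrFun hs 1, ?_⟩
    exact (FinVec.etaExpand_eq s).symm ▸ hp
  · rintro ⟨x, x', rfl, rfl, hp⟩
    exact ⟨![x, x'], (comp_vec2 j x x').symm, hp⟩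

structure IsGluing (A B M : Str) (d : A.Dom) (e : B.Dom)
    (jA : A.Dom → M.Dom) (jB : B.Dom → M.Dom) : Prop where
  injective_left : Function.Injective jA
  injective_right : Function.Injective jB
  eq_of_left_eq_right : ∀ x y, jA x = jB y → x = d ∧ y = e
  left_or_right : ∀ z, (∃ x, z = jA x) ∨ ∃ y, z = jB y
  rel_iff : ∀ k R t, M.rel k R t ↔
    (∃ s, t = jA ∘ s ∧ A.rel k R s) ∨ ∃ s, t = jB ∘ s ∧ B.rel k R s

namespace IsGluing

variable {A B M : Str} {d : A.Dom} {e : B.Dom} {jA : A.Dom → M.Dom} {jB : B.Dom → M.Dom}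

lemma symm (hg : IsGluing A B M d e jA jB) : IsGluing B A M e d jB jA where
  injective_left := hg.injective_right
  injective_right := hg.injective_left
  eq_of_left_eq_right x y hxy := (hg.eq_of_left_eq_right y x hxy.symm).symm
  left_or_right z := (hg.left_or_right z).symm
  rel_iff k R t := (hg.rel_iff k R t).trans or_comm

lemma withConst (hg : IsGluing A B M d e jA jB) (c : ℕ → M.Dom) :
    IsGluing A B (M.withConst c) d e jA jB :=
  ⟨hg.injective_left, hg.injective_right, hg.eq_of_left_eq_right, hg.left_or_right, hg.rel_iff⟩

lemma rel_one_iff (hg : IsGluing A B M d e jA jB) (c : ℕ) (z : M.Dom) :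
    M.rel 1 c ![z] ↔ (∃ x, z = jA x ∧ A.rel 1 c ![x]) ∨ ∃ y, z = jB y ∧ B.rel 1 c ![y] := by
  rw [hg.rel_iff, exists_vec1_eq_comp, exists_vec1_eq_comp]

lemma roleHolds_iff (hg : IsGluing A B M d e jA jB) (ρ : Bool × ℕ) (z w : M.Dom) :
    roleHolds M ρ z w ↔
      (∃ x x', z = jA x ∧ w = jA x' ∧ roleHolds A ρ x x') ∨
        ∃ y y', z = jB y ∧ w = jB y' ∧ roleHolds B ρ y y' := by
  unfold roleHolds
  split_ifs
  · rw [hg.rel_iff, exists_vec2_eq_comp, exists_vec2_eq_comp]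
    refine or_congr ?_ ?_ <;>
      exact ⟨fun ⟨x, x', h₁, h₂, h⟩ => ⟨x', x, h₂, h₁, h⟩,
        fun ⟨x, x', h₁, h₂, h⟩ => ⟨x', x, h₂, h₁, h⟩⟩
  · rw [hg.rel_iff, exists_vec2_eq_comp, exists_vec2_eq_comp]

theorem mem_interp_left_iff (hg : IsGluing A B M d e jA jB) {C : Concept}
    (hde : ∀ D ∈ C.subconcepts, (d ∈ D.interp A ↔ e ∈ D.interp B)) (x : A.Dom) :
    jA x ∈ C.interp M ↔ x ∈ C.interp A := by
  induction C generalizing A B d e jA jB x with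
  | top => exact Iff.rfl
  | atom c =>
      show M.rel 1 c ![jA x] ↔ A.rel 1 c ![x]
      rw [hg.rel_one_iff]
      refine ⟨?_, fun hx => Or.inl ⟨x, rfl, hx⟩⟩
      rintro (⟨x', hx, hx'⟩ | ⟨y, hy, hy'⟩)
      · rwa [hg.injective_left hx]
      · obtain ⟨rfl, rfl⟩ := hg.eq_of_left_eq_right _ _ hy
        exact (hde _ (Concept.mem_subconcepts_self _)).2 hy'
  | neg C ih =>
      exact not_congr (ih hg (fun D hD => hde D (Set.mem_insert_of_mem _ hD)) x)
  | inter C₁ C₂ ih₁ ih₂ =>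
      exact and_congr (ih₁ hg (fun D hD => hde D (Or.inr (Or.inl hD))) x)
        (ih₂ hg (fun D hD => hde D (Or.inr (Or.inr hD))) x)
  | exRole inv R C ih =>
      have hdeC : ∀ D ∈ C.subconcepts, (d ∈ D.interp A ↔ e ∈ D.interp B) :=
        fun D hD => hde D (Set.mem_insert_of_mem _ hD)
      have ihA := ih hg hdeC
      have ihB := ih hg.symm fun D hD => (hdeC D hD).symm
      simp only [Concept.mem_interp_exRole, hg.roleHolds_iff]
      constructor
      · rintro ⟨z, hz, ⟨x₀, x', hx, rfl, hr⟩ | ⟨y, y', hy, rfl, hr⟩⟩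
        · rw [hg.injective_left hx]
          exact ⟨x', (ihA x').1 hz, hr⟩
        · obtain ⟨rfl, rfl⟩ := hg.eq_of_left_eq_right _ _ hy
          exact (hde _ (Concept.mem_subconcepts_self _)).2 ⟨y', (ihB y').1 hz, hr⟩
      · rintro ⟨x', hx', hr⟩
        exact ⟨jA x', (ihA x').2 hx', Or.inl ⟨x, x', rfl, rfl, hr⟩⟩

theorem isModel {K : ALCIKB} (hg : IsGluing A B M d e jA jB) (hA : A.IsModel K.toKB)
    (hB : B.IsModel K.toKB) (hde : ∀ C ∈ K.cl, (d ∈ C.interp A ↔ e ∈ C.interp B))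
    (hconst : ∀ n, M.const n = jA (A.const n)) : M.IsModel K.toKB := by
  rw [Str.isModel_toKB_iff] at hA hB ⊢
  refine ⟨fun p hp z hz => ?_, fun a ha => (hg.rel_iff _ _ _).2 (Or.inl ⟨_, ?_, hA.2 a ha⟩)⟩
  · obtain ⟨h₁, h₂⟩ := K.subconcepts_subset_cl hp
    rcases hg.left_or_right z with ⟨x, rfl⟩ | ⟨y, rfl⟩
    · rw [hg.mem_interp_left_iff fun D hD => hde D (h₁ hD)] at hz
      rw [hg.mem_interp_left_iff fun D hD => hde D (h₂ hD)]
      exact hA.1 p hp hz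
    · rw [hg.symm.mem_interp_left_iff fun D hD => (hde D (h₁ hD)).symm] at hz
      rw [hg.symm.mem_interp_left_iff fun D hD => (hde D (h₂ hD)).symm]
      exact hB.1 p hp hz
  · funext i
    exact hconst _

end IsGluing

section Glue

variable {α β : Type} (a : α) (b : β)

open Classical in
noncomputable def glueRight (y : β) : α ⊕ {y : β // y ≠ b} :=
  if h : y = b then .inl a else .inr ⟨y, h⟩

lemma glueRight_self : glueRight a b b = .inl a := dif_pos rfl

lemma glueRight_injective : Function.Injective (glueRight a b) := by
  intro y y' h
  unfold glueRight at h
  split_ifs at h with hy hy' <;> simp_all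

lemma eq_of_inl_eq_glueRight {x : α} {y : β} (h : .inl x = glueRight a b y) : x = a ∧ y = b := by
  unfold glueRight at h
  split_ifs at h with hy
  exact ⟨Sum.inl_injective h, hy⟩

end Glue

/-- The constants are interpreted arbitrarily; the two interpretations that matter are supplied
by `Str.withConst`. -/
noncomputable def glue (A B : Str) (d : A.Dom) (e : B.Dom) : Str where
  Dom := A.Dom ⊕ {y : B.Dom // y ≠ e}
  dom_nonempty := A.dom_nonempty.map .inl
  rel k R t := (∃ s, t = .inl ∘ s ∧ A.rel k R s) ∨ ∃ s, t = glueRight d e ∘ s ∧ B.rel k R s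
  const _ := .inl d

lemma isGluing_glue (A B : Str) (d : A.Dom) (e : B.Dom) :
    IsGluing A B (glue A B d e) d e .inl (glueRight d e) where
  injective_left := Sum.inl_injective
  injective_right := glueRight_injective d e
  eq_of_left_eq_right _ _ := eq_of_inl_eq_glueRight d e
  left_or_right
    | .inl x => .inl ⟨x, rfl⟩
    | .inr ⟨y, hy⟩ => .inr ⟨y, by rw [glueRight, dif_neg hy]⟩
  rel_iff _ _ _ := Iff.rfl

namespace ALCIKB

variable {K : ALCIKB}

theorem exists_models_const_eq {A B : Str} (hA : A.IsModel K.toKB) (hB : B.IsModel K.toKB)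
    {a b : ℕ} (h : K.tp A (A.const a) = K.tp B (B.const b)) :
    ∃ (M : Str) (c₁ c₂ : ℕ → M.Dom),
      (M.withConst c₁).IsModel K.toKB ∧ (M.withConst c₂).IsModel K.toKB ∧ c₁ a = c₂ b := by
  have hde := K.tp_eq_tp_iff.1 h
  have hg := isGluing_glue A B (A.const a) (B.const b)
  refine ⟨glue A B (A.const a) (B.const b), Sum.inl ∘ A.const,
    glueRight (A.const a) (B.const b) ∘ B.const, ?_, ?_, (glueRight_self _ _).symm⟩
  · exact (hg.withConst _).isModel hA hB hde fun _ => rfl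
  · exact (hg.withConst _).symm.isModel hB hA (fun C hC => (hde C hC).symm) fun _ => rfl

theorem tp_ne_of_entails {φ : Fml} {a b : ℕ} (hpos : K.toKB.entails φ fun _ : Fin 1 => a)
    (hneg : K.toKB.entails (.neg φ) fun _ : Fin 1 => b) {A B : Str} (hA : A.IsModel K.toKB)
    (hB : B.IsModel K.toKB) : K.tp A (A.const a) ≠ K.tp B (B.const b) := by
  intro h
  obtain ⟨M, c₁, c₂, h₁, h₂, hc⟩ := exists_models_const_eq hA hB h
  have hφ : φ.Sat M fun _ => c₁ a :=
    (Fml.sat_withConst c₁ φ _).1 (hpos _ h₁ (fun _ => c₁ a) fun _ => rfl)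
  exact hneg _ h₂ (fun _ => c₁ a) (fun _ => hc) ((Fml.sat_withConst c₂ φ _).2 hφ)

variable (K) in
open Classical in
noncomputable def typeConcept (t : Set Concept) : Concept :=
  Concept.conj (K.cl_finite.toFinset.filter (· ∈ t)).toList

lemma mem_interp_typeConcept {t : Set Concept} (ht : t ⊆ K.cl) {A : Str} {d : A.Dom} :
    d ∈ (K.typeConcept t).interp A ↔ ∀ C ∈ t, d ∈ C.interp A := by
  classical
  simp only [typeConcept, Concept.mem_interp_conj, Finset.mem_toList, Finset.mem_filter,
    Set.Finite.mem_toFinset]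
  exact ⟨fun h C hC => h C ⟨ht hC, hC⟩, fun h C hC => h C hC.2⟩

lemma csig_typeConcept_subset (t : Set Concept) : (K.typeConcept t).csig ⊆ K.sigK := by
  classical
  refine (Concept.csig_conj_subset _).trans (Set.iUnion₂_subset fun C hC => ?_)
  simp only [Finset.mem_toList, Finset.mem_filter, Set.Finite.mem_toFinset] at hC
  exact K.csig_subset_sigK hC.1

lemma subset_cl_of_realizableAt {P : Set ℕ} {t : Set Concept}
    (ht : ∃ a ∈ P, K.RealizableAt a t) : t ⊆ K.cl := by
  obtain ⟨_, _, _, _, rfl⟩ := ht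
  exact fun _ hC => hC.1

variable (K) in
lemma finite_setOf_realizableAt (P : Set ℕ) : {t | ∃ a ∈ P, K.RealizableAt a t}.Finite :=
  K.cl_finite.finite_subsets.subset fun _ => subset_cl_of_realizableAt

variable (K) in
/-- `t₁ ⊔ ⋯ ⊔ tₙ` for the `K`-types `tᵢ` realizable at some positive example. -/
noncomputable def typeDisj (P : Set ℕ) : Concept :=
  Concept.disj ((K.finite_setOf_realizableAt P).toFinset.toList.map K.typeConcept)

lemma mem_interp_typeDisj {P : Set ℕ} {A : Str} {d : A.Dom} :
    d ∈ (K.typeDisj P).interp A ↔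
      ∃ t, (∃ a ∈ P, K.RealizableAt a t) ∧ ∀ C ∈ t, d ∈ C.interp A := by
  simp only [typeDisj, Concept.mem_interp_disj, List.mem_map, Finset.mem_toList,
    Set.Finite.mem_toFinset, Set.mem_ofPred_eq]
  constructor
  · rintro ⟨_, ⟨t, ht, rfl⟩, hd⟩
    exact ⟨t, ht, (mem_interp_typeConcept (subset_cl_of_realizableAt ht)).1 hd⟩
  · rintro ⟨t, ht, hd⟩
    exact ⟨_, ⟨t, ht, rfl⟩, (mem_interp_typeConcept (subset_cl_of_realizableAt ht)).2 hd⟩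

lemma csig_typeDisj_subset (P : Set ℕ) : (K.typeDisj P).csig ⊆ K.sigK := by
  refine (Concept.csig_disj_subset _).trans (Set.iUnion₂_subset fun C hC => ?_)
  obtain ⟨t, -, rfl⟩ := List.mem_map.1 hC
  exact K.csig_typeConcept_subset t

lemma StronglySeparatesC.stronglySeparates_toFml {P N : Set ℕ} {C : Concept}
    (h : K.StronglySeparatesC P N C) :
    StronglySeparates K.toKB {t : Fin 1 → ℕ | t 0 ∈ P} {t : Fin 1 → ℕ | t 0 ∈ N}
      (C.toFml 0) := by
  refine ⟨fun m hm => ?_, fun t ht A hA v hv => ?_, fun t ht A hA v hv => ?_⟩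
  · have := C.free_toFml zero_le_one hm
    simp_all
  · rw [Concept.sat_toFml C zero_le_one, show v 0 = A.const (t 0) from hv 0]
    exact h.1 _ ht A hA
  · rw [Fml.Sat, Concept.sat_toFml C zero_le_one, show v 0 = A.const (t 0) from hv 0]
    exact h.2 _ ht A hA

end ALCIKB

theorem statement_4_general (K : ALCIKB) (P N : Set ℕ) :
    List.TFAE
      [K.CStronglySeparable P N,
       NonProjStronglySeparable Set.univ K.toKB
         {t : Fin 1 → ℕ | t 0 ∈ P} {t : Fin 1 → ℕ | t 0 ∈ N},
       ∀ a ∈ P, ∀ b ∈ N,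
         ¬ ∃ A B : Str, A.IsModel K.toKB ∧ B.IsModel K.toKB ∧
             K.tp A (A.const a) = K.tp B (B.const b),
       (∀ a ∈ P, ∀ A : Str, A.IsModel K.toKB →
           ∃ t : Set Concept, (∃ a' ∈ P, K.RealizableAt a' t) ∧
             ∀ C ∈ t, A.const a ∈ C.interp A) ∧
       (∀ b ∈ N, ∀ A : Str, A.IsModel K.toKB →
           ¬ ∃ t : Set Concept, (∃ a' ∈ P, K.RealizableAt a' t) ∧
             ∀ C ∈ t, A.const b ∈ C.interp A)] := by
  tfae_have 1 → 2
    | ⟨C, hsig, hC⟩ => ⟨C.toFml 0, trivial, (C.sig_toFml 0).trans_subset hsig,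
        hC.stronglySeparates_toFml⟩
  tfae_have 2 → 3 := by
    rintro ⟨_, -, -, -, hpos, hneg⟩ a ha b hb ⟨_, _, hA, hB, htp⟩
    exact ALCIKB.tp_ne_of_entails (hpos _ ha) (hneg _ hb) hA hB htp
  tfae_have 3 → 4 := fun h =>
    ⟨fun a ha A hA => ⟨K.tp A (A.const a), ⟨a, ha, A, hA, rfl⟩, fun _ hC => hC.2⟩,
      fun b hb B hB ⟨t, ⟨a, ha, A, hA, ht⟩, hbt⟩ =>
        h a ha b hb ⟨A, B, hA, hB,
          (K.tp_eq_of_forall_mem_interp fun C hC => hbt C (ht ▸ hC)).symm⟩⟩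
  tfae_have 4 → 1
    | ⟨hpos, hneg⟩ => ⟨K.typeDisj P, K.csig_typeDisj_subset P,
        fun a ha A hA => ALCIKB.mem_interp_typeDisj.2 (hpos a ha A hA),
        fun b hb A hA hb' => hneg b hb A hA (ALCIKB.mem_interp_typeDisj.1 hb')⟩
  tfae_finish

/-- characterization of strong separability for labeled ALCI-KBs
in terms of K-types. -/
theorem statement_4 (K : ALCIKB) (P N : Set ℕ) (hPne : P.Nonempty) (hNne : N.Nonempty)
    (hPcons : ∀ a ∈ P, a ∈ K.db.consts) (hNcons : ∀ b ∈ N, b ∈ K.db.consts) :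
    List.TFAE
      [K.CStronglySeparable P N,
       NonProjStronglySeparable Set.univ K.toKB
         {t : Fin 1 → ℕ | t 0 ∈ P} {t : Fin 1 → ℕ | t 0 ∈ N},
       ∀ a ∈ P, ∀ b ∈ N,
         ¬ ∃ A B : Str, A.IsModel K.toKB ∧ B.IsModel K.toKB ∧
             K.tp A (A.const a) = K.tp B (B.const b),
       (∀ a ∈ P, ∀ A : Str, A.IsModel K.toKB →
           ∃ t : Set Concept, (∃ a' ∈ P, K.RealizableAt a' t) ∧
             ∀ C ∈ t, A.const a ∈ C.interp A) ∧
       (∀ b ∈ N, ∀ A : Str, A.IsModel K.toKB →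
           ¬ ∃ t : Set Concept, (∃ a' ∈ P, K.RealizableAt a' t) ∧
             ∀ C ∈ t, A.const b ∈ C.interp A)] :=
  statement_4_general K P N

end Sep
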